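/- For all 2<q<3, ε>0, r>0 and all t>r, setting c_r = r^{q−3}+1, one has (h_ε(t)·t)^{3/2} ≤ (2q·c_r^{1/2}/(q−2)) · ((1/2)·h_ε(t)·t² − H_ε(t)). -/

import Mathlib

noncomputable section

/-- `b_ε(t) = ϑ(ε t)`. -/
def bfun (ϑ : ℝ → ℝ) (ε t : ℝ) : ℝ := ϑ (ε * t)

/-- `m_ε(t) = ∫₀ᵗ b_ε(s) ds`. -/
def mfun (ϑ : ℝ → ℝ) (ε t : ℝ) : ℝ := ∫ s in (0:ℝ)..t, bfun ϑ ε s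

/-- The truncated nonlinearity `h_ε`, with `h_ε(0)=0`. -/
def hfun (ϑ : ℝ → ℝ) (q ε t : ℝ) : ℝ :=
  if 0 < t then
    t ^ (q - 2) + (q / 3) * t ^ (q - 2) * (mfun ϑ ε (t ^ 2)) ^ ((3 - q) / 2)
      + ((3 - q) / 3) * t ^ q * (mfun ϑ ε (t ^ 2)) ^ ((3 - q) / 2 - 1) * bfun ϑ ε (t ^ 2)
  else 0

/-- `H_ε(t) = t^q/q + (t^q/3)(m_ε(t²))^{(3−q)/2} ( = ∫₀ᵗ h_ε(s)·s ds )`. -/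
def Hfun (ϑ : ℝ → ℝ) (q ε t : ℝ) : ℝ :=
  t ^ q / q + (t ^ q / 3) * (mfun ϑ ε (t ^ 2)) ^ ((3 - q) / 2)

section auxsec
variable {ϑ : ℝ → ℝ} {ε : ℝ}

lemma bfun_cont (hc : Continuous ϑ) : Continuous (bfun ϑ ε) :=
  hc.comp (continuous_const.mul continuous_id)

lemma mfun_le (hc : Continuous ϑ) (hϑrange : ∀ t, 0 ≤ t → ϑ t ∈ Set.Icc (0:ℝ) 1)
    (hε : 0 < ε) {T : ℝ} (hT : 0 ≤ T) : mfun ϑ ε T ≤ T := by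
  have h1 : mfun ϑ ε T ≤ ∫ s in (0:ℝ)..T, (1:ℝ) := by
    apply intervalIntegral.integral_mono_on hT ((bfun_cont hc).intervalIntegrable _ _)
      intervalIntegrable_const
    intro s hs
    exact (hϑrange _ (mul_nonneg hε.le hs.1)).2
  simpa using h1

lemma mfun_pos (hc : Continuous ϑ) (hϑrange : ∀ t, 0 ≤ t → ϑ t ∈ Set.Icc (0:ℝ) 1)
    (hϑone : ∀ t, 0 ≤ t → t ≤ 1 → ϑ t = 1) (hε : 0 < ε)
    {T : ℝ} (hT : 0 < T) : 0 < mfun ϑ ε T := by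
  set δ := min T (1/ε) with hδdef
  have hδpos : 0 < δ := lt_min hT (by positivity)
  have hδT : δ ≤ T := min_le_left _ _
  have hsplit : mfun ϑ ε T = (∫ s in (0:ℝ)..δ, bfun ϑ ε s) + ∫ s in δ..T, bfun ϑ ε s := by
    rw [mfun, ← intervalIntegral.integral_add_adjacent_intervals
      ((bfun_cont hc).intervalIntegrable _ _) ((bfun_cont hc).intervalIntegrable _ _)]
  have h1 : (∫ s in (0:ℝ)..δ, bfun ϑ ε s) = δ := by
    rw [intervalIntegral.integral_congr (g := fun _ => (1:ℝ)) ?_]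
    · simp
    · intro s hs
      rw [Set.uIcc_of_le hδpos.le] at hs
      apply hϑone _ (mul_nonneg hε.le hs.1)
      have h3 : s ≤ 1/ε := hs.2.trans (min_le_right _ _)
      calc ε * s ≤ ε * (1/ε) := mul_le_mul_of_nonneg_left h3 hε.le
        _ = 1 := by field_simp
  have h2 : 0 ≤ ∫ s in δ..T, bfun ϑ ε s := by
    apply intervalIntegral.integral_nonneg hδT
    intro s hs
    exact (hϑrange _ (mul_nonneg hε.le (hδpos.le.trans hs.1))).1
  rw [hsplit, h1]
  linarith

lemma bfun_le_of_le (hc : ContDiff ℝ (⊤ : ℕ∞) ϑ) (hϑmono : ∀ t, 0 ≤ t → deriv ϑ t ≤ 0)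
    (hε : 0 < ε) {s T : ℝ} (hs : 0 ≤ s) (hsT : s ≤ T) : bfun ϑ ε T ≤ bfun ϑ ε s := by
  have hanti : AntitoneOn ϑ (Set.Ici (0:ℝ)) := by
    apply antitoneOn_of_deriv_nonpos (convex_Ici 0) hc.continuous.continuousOn
      (fun x _ => ((hc.differentiable (by simp)).differentiableAt).differentiableWithinAt)
    intro x hx
    rw [interior_Ici] at hx
    exact hϑmono x hx.le
  exact hanti (Set.mem_Ici.2 (mul_nonneg hε.le hs)) (Set.mem_Ici.2 (mul_nonneg hε.le (hs.trans hsT)))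
    (mul_le_mul_of_nonneg_left hsT hε.le)

lemma Tb_le_mfun (hc : ContDiff ℝ (⊤ : ℕ∞) ϑ) (hϑmono : ∀ t, 0 ≤ t → deriv ϑ t ≤ 0)
    (hε : 0 < ε) {T : ℝ} (hT : 0 ≤ T) : T * bfun ϑ ε T ≤ mfun ϑ ε T := by
  have h1 : (∫ s in (0:ℝ)..T, bfun ϑ ε T) ≤ mfun ϑ ε T := by
    apply intervalIntegral.integral_mono_on hT intervalIntegrable_const
      ((bfun_cont hc.continuous).intervalIntegrable _ _)
    intro s hs
    exact bfun_le_of_le hc hϑmono hε hs.1 hs.2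
  simpa [mul_comm] using h1

end auxsec

set_option maxHeartbeats 1000000 in
theorem stmt8 (ϑ : ℝ → ℝ)
    (hϑsmooth : ContDiff ℝ (⊤ : ℕ∞) ϑ)
    (hϑrange : ∀ t, 0 ≤ t → ϑ t ∈ Set.Icc (0:ℝ) 1)
    (hϑone : ∀ t, 0 ≤ t → t ≤ 1 → ϑ t = 1)
    (hϑzero : ∀ t, 2 ≤ t → ϑ t = 0)
    (hϑmono : ∀ t, 0 ≤ t → deriv ϑ t ≤ 0)
    (q ε : ℝ) (hq2 : 2 < q) (hq3 : q < 3) (hε : 0 < ε)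
    (r : ℝ) (hr : 0 < r) (t : ℝ) (ht : r < t) :
    (hfun ϑ q ε t * t) ^ ((3:ℝ) / 2)
      ≤ (2 * q * (r ^ (q - 3) + 1) ^ ((1:ℝ) / 2) / (q - 2))
          * ((1 / 2) * hfun ϑ q ε t * t ^ 2 - Hfun ϑ q ε t) := by
  have ht0 : 0 < t := hr.trans ht
  have hT : (0:ℝ) < t ^ 2 := by positivity
  set M := mfun ϑ ε (t ^ 2) with hMdef
  set B := bfun ϑ ε (t ^ 2) with hBdef
  have hM : 0 < M := mfun_pos hϑsmooth.continuous hϑrange hϑone hε hT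
  have hMle : M ≤ t ^ 2 := mfun_le hϑsmooth.continuous hϑrange hε hT.le
  have hB0 : 0 ≤ B := (hϑrange _ (by positivity)).1
  have hTb : t ^ 2 * B ≤ M := Tb_le_mfun hϑsmooth hϑmono hε hT.le
  set e : ℝ := (3 - q) / 2 with hedef
  have he0 : 0 ≤ e := by rw [hedef]; linarith
  -- atoms
  set a : ℝ := t ^ q with hadef
  set w : ℝ := M ^ e with hwdef
  set P3 : ℝ := t ^ q * M ^ (e - 1) * B * t ^ 2 with hP3def
  have ha : 0 < a := Real.rpow_pos_of_pos ht0 q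
  have hw : 0 ≤ w := Real.rpow_nonneg hM.le e
  have ht2 : (t:ℝ) ^ (2:ℕ) = t ^ ((2:ℝ)) := (Real.rpow_natCast t 2).symm
  have hmul : t ^ (q - 2) * t ^ (2:ℕ) = a := by
    rw [ht2, hadef, ← Real.rpow_add ht0]; norm_num
  have hfun_eq : hfun ϑ q ε t
      = t ^ (q - 2) + (q / 3) * t ^ (q - 2) * w + ((3 - q) / 3) * t ^ q * M ^ (e - 1) * B := by
    rw [hfun, if_pos ht0]
  have hA : hfun ϑ q ε t * t ^ 2
      = a + (q / 3) * (a * w) + ((3 - q) / 3) * P3 := by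
    rw [hfun_eq, hP3def]
    calc (t ^ (q - 2) + (q / 3) * t ^ (q - 2) * w + ((3 - q) / 3) * t ^ q * M ^ (e - 1) * B) * t ^ 2
        = (t ^ (q - 2) * t ^ (2:ℕ)) + (q / 3) * ((t ^ (q - 2) * t ^ (2:ℕ)) * w)
          + ((3 - q) / 3) * (t ^ q * M ^ (e - 1) * B * t ^ 2) := by ring
      _ = a + (q / 3) * (a * w) + ((3 - q) / 3) * (t ^ q * M ^ (e - 1) * B * t ^ 2) := by
          rw [hmul]
  have hP3eq : P3 = (a * w) * (t ^ 2 * B / M) := by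
    rw [hP3def, Real.rpow_sub_one hM.ne', hadef, hwdef]
    field_simp
  have hawnn : 0 ≤ a * w := mul_nonneg ha.le hw
  have hP3le : P3 ≤ a * w := by
    rw [hP3eq]
    exact mul_le_of_le_one_right hawnn ((div_le_one hM).2 hTb)
  have hP3nn : 0 ≤ P3 := by
    rw [hP3eq]
    have : 0 ≤ t ^ 2 * B / M := by positivity
    exact mul_nonneg hawnn this
  have haw_le : a * w ≤ t ^ ((3:ℝ)) := by
    have h1 : w ≤ (t ^ (2:ℕ) : ℝ) ^ e := Real.rpow_le_rpow hM.le hMle he0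
    have h2 : ((t ^ (2:ℕ) : ℝ)) ^ e = t ^ (3 - q) := by
      rw [ht2, ← Real.rpow_mul ht0.le, show (2:ℝ) * e = 3 - q by rw [hedef]; ring]
    have h3 : a * t ^ (3 - q) = t ^ ((3:ℝ)) := by
      rw [hadef, ← Real.rpow_add ht0]; norm_num
    calc a * w ≤ a * t ^ (3 - q) := by
          rw [h2] at h1; exact mul_le_mul_of_nonneg_left h1 ha.le
      _ = t ^ ((3:ℝ)) := h3
  have ha_le : a ≤ r ^ (q - 3) * t ^ ((3:ℝ)) := by
    have h1 : t ^ (q - 3) ≤ r ^ (q - 3) :=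
      Real.rpow_le_rpow_of_nonpos hr ht.le (by linarith)
    have h2 : t ^ (q - 3) * t ^ ((3:ℝ)) = a := by
      rw [hadef, ← Real.rpow_add ht0]; norm_num
    calc a = t ^ (q - 3) * t ^ ((3:ℝ)) := h2.symm
      _ ≤ r ^ (q - 3) * t ^ ((3:ℝ)) :=
          mul_le_mul_of_nonneg_right h1 (Real.rpow_nonneg ht0.le _)
  set A : ℝ := hfun ϑ q ε t * t ^ 2 with hAdef
  have hApos : 0 < A := by
    rw [hA]
    have h1 : 0 ≤ (q / 3) * (a * w) := mul_nonneg (by linarith) hawnn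
    have h2 : 0 ≤ ((3 - q) / 3) * P3 := mul_nonneg (by linarith) hP3nn
    linarith
  set c : ℝ := r ^ (q - 3) + 1 with hcdef
  have hc : 0 < c := by
    have := Real.rpow_pos_of_pos hr (q - 3); rw [hcdef]; linarith
  have hAle : A ≤ c * t ^ ((3:ℝ)) := by
    rw [hA, hcdef]
    have h1 : (q / 3) * (a * w) ≤ (q / 3) * t ^ ((3:ℝ)) :=
      mul_le_mul_of_nonneg_left haw_le (by linarith)
    have h2 : ((3 - q) / 3) * P3 ≤ ((3 - q) / 3) * t ^ ((3:ℝ)) :=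
      mul_le_mul_of_nonneg_left (hP3le.trans haw_le) (by linarith)
    nlinarith [ha_le]
  have hHeq : Hfun ϑ q ε t = a / q + a * w / 3 := by
    rw [Hfun, hadef, hwdef]; ring
  have hq0 : (0:ℝ) < q := by linarith
  have hD : ((q - 2) / (2 * q)) * A ≤ (1 / 2) * A - Hfun ϑ q ε t := by
    rw [hA, hHeq]
    have key : (1 / 2) * (a + (q / 3) * (a * w) + ((3 - q) / 3) * P3)
        - (a / q + a * w / 3)
        - ((q - 2) / (2 * q)) * (a + (q / 3) * (a * w) + ((3 - q) / 3) * P3)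
        = ((3 - q) / (3 * q)) * P3 := by
      field_simp
      ring
    have h2 : 0 ≤ ((3 - q) / (3 * q)) * P3 :=
      mul_nonneg (div_nonneg (by linarith) (by linarith)) hP3nn
    linarith
  -- final chain
  have htp : (0:ℝ) < t ^ ((3:ℝ)/2) := Real.rpow_pos_of_pos ht0 _
  have hLHS : (hfun ϑ q ε t * t) ^ ((3:ℝ) / 2) = A * A ^ ((1:ℝ)/2) / t ^ ((3:ℝ)/2) := by
    have h1 : hfun ϑ q ε t * t = A / t := by
      rw [hAdef]; field_simp
    rw [h1, Real.div_rpow hApos.le ht0.le]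
    congr 1
    rw [show ((3:ℝ)/2) = 1 + (1:ℝ)/2 by norm_num, Real.rpow_add hApos, Real.rpow_one]
  have hArt : A ^ ((1:ℝ)/2) ≤ c ^ ((1:ℝ)/2) * t ^ ((3:ℝ)/2) := by
    calc A ^ ((1:ℝ)/2) ≤ (c * t ^ ((3:ℝ))) ^ ((1:ℝ)/2) :=
          Real.rpow_le_rpow hApos.le hAle (by norm_num)
      _ = c ^ ((1:ℝ)/2) * t ^ ((3:ℝ)/2) := by
          rw [Real.mul_rpow hc.le (Real.rpow_nonneg ht0.le _),
            ← Real.rpow_mul ht0.le]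
          norm_num
  have hfac : (0:ℝ) < 2 * q * c ^ ((1:ℝ)/2) / (q - 2) := by
    apply div_pos _ (by linarith)
    have h := Real.rpow_pos_of_pos hc ((1:ℝ)/2)
    exact mul_pos (by linarith : (0:ℝ) < 2 * q) h
  calc (hfun ϑ q ε t * t) ^ ((3:ℝ) / 2)
      = A * A ^ ((1:ℝ)/2) / t ^ ((3:ℝ)/2) := hLHS
    _ ≤ A * (c ^ ((1:ℝ)/2) * t ^ ((3:ℝ)/2)) / t ^ ((3:ℝ)/2) := by
        gcongr
    _ = c ^ ((1:ℝ)/2) * A := by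
        rw [mul_div_assoc, mul_div_assoc, div_self htp.ne', mul_one, mul_comm]
    _ = (2 * q * c ^ ((1:ℝ)/2) / (q - 2)) * (((q - 2) / (2 * q)) * A) := by
        have hne1 : q - 2 ≠ 0 := by linarith
        have hne2 : (2:ℝ) * q ≠ 0 := by positivity
        generalize c ^ ((1:ℝ)/2) = X
        generalize A = Y
        field_simp
    _ ≤ (2 * q * c ^ ((1:ℝ)/2) / (q - 2)) * ((1 / 2) * A - Hfun ϑ q ε t) :=
        mul_le_mul_of_nonneg_left hD hfac.le
    _ = (2 * q * c ^ ((1:ℝ)/2) / (q - 2)) * ((1 / 2) * hfun ϑ q ε t * t ^ 2 - Hfun ϑ q ε t) := by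
        rw [hAdef]; ring
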